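/- If I is an independent set of G that does not contain vertex v and |I| ≥ α(G) where α(G) is the maximum size of an independent set, then I contains at least two vertices of N(v), unless there exists a maximum independent set of G containing v of the same size. More precisely: if no maximum independent set of G contains v, then every maximum independent set I satisfies |I ∩ N(v)| ≥ 2. -/

import Mathlib

/-! Exchange argument: for an independent set `I` avoiding `v`, the set `insert v (I \ N(v))` is
again independent and has `|I| + 1 - |I ∩ N(v)|` elements. If `|I ∩ N(v)| ≤ 1` and `I` is maximum,
it is therefore a maximum independent set containing `v`. -/

variable {V : Type*} [Fintype V] [DecidableEq V]

def IsIndep (G : SimpleGraph V) (I : Finset V) : Prop :=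
  ∀ u ∈ I, ∀ v ∈ I, ¬ G.Adj u v

def IsMaxIndep (G : SimpleGraph V) (I : Finset V) : Prop :=
  IsIndep G I ∧ ∀ J : Finset V, IsIndep G J → J.card ≤ I.card

section

variable {G : SimpleGraph V} [DecidableRel G.Adj] {I : Finset V} {v : V}

theorem IsIndep.insert_sdiff_neighborFinset (hI : IsIndep G I) :
    IsIndep G (insert v (I \ G.neighborFinset v)) := by
  intro a ha b hb hab
  simp only [Finset.mem_insert, Finset.mem_sdiff, SimpleGraph.mem_neighborFinset] at ha hb
  rcases ha with rfl | ⟨haI, hva⟩ <;> rcases hb with rfl | ⟨hbI, hvb⟩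
  · exact G.loopless.irrefl _ hab
  · exact hvb hab
  · exact hva hab.symm
  · exact hI a haI b hbI hab

theorem card_insert_sdiff_neighborFinset_add_card_inter (hv : v ∉ I) :
    (insert v (I \ G.neighborFinset v)).card + (I ∩ G.neighborFinset v).card = I.card + 1 := by
  have hv' : v ∉ I \ G.neighborFinset v := fun h => hv (Finset.mem_sdiff.mp h).1
  rw [Finset.card_insert_of_notMem hv', add_right_comm, Finset.card_sdiff_add_card_inter]

end

omit [Fintype V] [DecidableEq V] in
theorem IsMaxIndep.of_card_le {G : SimpleGraph V} {I J : Finset V} (hI : IsMaxIndep G I)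
    (hJ : IsIndep G J) (hcard : I.card ≤ J.card) : IsMaxIndep G J :=
  ⟨hJ, fun K hK => (hI.2 K hK).trans hcard⟩

theorem packing_constraint (G : SimpleGraph V) [DecidableRel G.Adj] (v : V)
    (hv : ¬ ∃ I : Finset V, IsMaxIndep G I ∧ v ∈ I) :
    ∀ I : Finset V, IsMaxIndep G I → 2 ≤ (I ∩ G.neighborFinset v).card := by
  intro I hI
  by_contra! hfew
  have hvI : v ∉ I := fun h => hv ⟨I, hI, h⟩
  have hcard := card_insert_sdiff_neighborFinset_add_card_inter (G := G) hvI
  exact hv ⟨_, hI.of_card_le hI.1.insert_sdiff_neighborFinset (by omega),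
    Finset.mem_insert_self v _⟩
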